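/- (Lemma 3.2) Let ε > 0, a_1 ∈ (0,a], and let u ∈ S(a_1) satisfy J_{ε,T}(u) < 0. Then [u] < R_0. Moreover, there exists δ > 0 such that every v ∈ ℋ with ‖v − u‖_ℋ < δ and ‖v‖_2² ≤ a satisfies J_{ε,T}(v) = J_ε(v). -/

import Mathlib

open MeasureTheory Filter Set Topology
open scoped ENNReal

noncomputable section

abbrev EN (N : ℕ) := EuclideanSpace ℝ (Fin N)

/-- squared Gagliardo seminorm `[u]²` (as an extended nonnegative real). -/
def gagSq (N : ℕ) (s : ℝ) (u : EN N → ℝ) : ℝ≥0∞ :=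
  ∫⁻ x, ∫⁻ y, ENNReal.ofReal ((u x - u y) ^ 2 / ‖x - y‖ ^ ((N : ℝ) + 2 * s))

/-- squared Gagliardo seminorm `[u]²` as a real number. -/
def gagSqR (N : ℕ) (s : ℝ) (u : EN N → ℝ) : ℝ := (gagSq N s u).toReal

/-- the Gagliardo seminorm `[u]`. -/
def gagNorm (N : ℕ) (s : ℝ) (u : EN N → ℝ) : ℝ := Real.sqrt (gagSqR N s u)

/-- `‖u‖₂²`. -/
def l2sq (N : ℕ) (u : EN N → ℝ) : ℝ := ∫ x, (u x) ^ 2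

/-- membership in the fractional Sobolev space `ℋ = H^s`. -/
def memH (N : ℕ) (s : ℝ) (u : EN N → ℝ) : Prop :=
  MemLp u 2 (volume : Measure (EN N)) ∧ gagSq N s u < ⊤

/-- the sphere `S(c) = {u ∈ ℋ : ‖u‖₂² = c}`. -/
def msphere (N : ℕ) (s c : ℝ) : Set (EN N → ℝ) := {u | memH N s u ∧ l2sq N u = c}

/-- the nonlocal term `∫∫ |u(x)|^t |u(y)|^t / |x-y|^{N-α}`; `Q = nlterm N α q`, `P = nlterm N α p`. -/
def nlterm (N : ℕ) (α t : ℝ) (u : EN N → ℝ) : ℝ :=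
  (∫⁻ x, ∫⁻ y, ENNReal.ofReal (|u x| ^ t * |u y| ^ t / ‖x - y‖ ^ ((N : ℝ) - α))).toReal

/-- `‖u‖_ℋ² = [u]² + ‖u‖₂²`. -/
def hNormSq (N : ℕ) (s : ℝ) (u : EN N → ℝ) : ℝ := gagSqR N s u + l2sq N u

/-- `γ_t = (Nt − N − α)/(2ts)`. -/
def gam (N : ℕ) (s α t : ℝ) : ℝ := ((N : ℝ) * t - N - α) / (2 * t * s)

/-- the functional `I_μ`. -/
def Ifun (N : ℕ) (s α q p μ : ℝ) (u : EN N → ℝ) : ℝ :=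
  gagSqR N s u / 2 + μ / 2 * l2sq N u - nlterm N α q u / (2 * q) - nlterm N α p u / (2 * p)

/-- the truncated functional `I_{μ,T}`. -/
def ITfun (N : ℕ) (s α q p μ : ℝ) (τ : ℝ → ℝ) (u : EN N → ℝ) : ℝ :=
  gagSqR N s u / 2 + μ / 2 * l2sq N u - nlterm N α q u / (2 * q)
    - τ (gagNorm N s u) * nlterm N α p u / (2 * p)

/-- the functional `J_ε`. -/
def Jfun (N : ℕ) (s α q p : ℝ) (V : EN N → ℝ) (ε : ℝ) (u : EN N → ℝ) : ℝ :=
  gagSqR N s u / 2 + (∫ x, V (ε • x) * (u x) ^ 2) / 2 - nlterm N α q u / (2 * q)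
    - nlterm N α p u / (2 * p)

/-- the truncated functional `J_{ε,T}`. -/
def JTfun (N : ℕ) (s α q p : ℝ) (V : EN N → ℝ) (ε : ℝ) (τ : ℝ → ℝ) (u : EN N → ℝ) : ℝ :=
  gagSqR N s u / 2 + (∫ x, V (ε • x) * (u x) ^ 2) / 2 - nlterm N α q u / (2 * q)
    - τ (gagNorm N s u) * nlterm N α p u / (2 * p)

/-- the inner product of `ℋ`. -/
def Hinner (N : ℕ) (s : ℝ) (u v : EN N → ℝ) : ℝ :=
  (∫ x, ∫ y, (u x - u y) * (v x - v y) / ‖x - y‖ ^ ((N : ℝ) + 2 * s)) + ∫ x, u x * v x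

lemma young_sq (A B η : ℝ) (hη : 0 < η) :
    (A + B) ^ 2 ≤ (1 + η) * A ^ 2 + (1 + 1/η) * B ^ 2 := by
  have h1 : 0 < η⁻¹ := inv_pos.mpr hη
  have h2 : η * η⁻¹ = 1 := mul_inv_cancel₀ hη.ne'
  rw [one_div]
  nlinarith [sq_nonneg (η * A - B), mul_pos hη h1, sq_nonneg (A - B), sq_nonneg (A + B)]

lemma gag_integrand_aemeas (N : ℕ) (s : ℝ) (hs : 0 < s) (u : EN N → ℝ)
    (hu : AEStronglyMeasurable u (volume : Measure (EN N))) :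
    AEMeasurable (fun z : EN N × EN N =>
      ENNReal.ofReal ((u z.1 - u z.2) ^ 2 / ‖z.1 - z.2‖ ^ ((N : ℝ) + 2 * s)))
      ((volume : Measure (EN N)).prod volume) := by
  have h1 : AEMeasurable (fun z : EN N × EN N => u z.1)
      ((volume : Measure (EN N)).prod volume) := hu.aemeasurable.comp_fst
  have h2 : AEMeasurable (fun z : EN N × EN N => u z.2)
      ((volume : Measure (EN N)).prod volume) := hu.aemeasurable.comp_snd
  have hexp : (0:ℝ) ≤ (N : ℝ) + 2 * s := by positivity
  have h3 : Measurable (fun z : EN N × EN N => ‖z.1 - z.2‖ ^ ((N : ℝ) + 2 * s)) :=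
    ((Real.continuous_rpow_const hexp).comp (continuous_fst.sub continuous_snd).norm).measurable
  exact ENNReal.measurable_ofReal.comp_aemeasurable
    (((h1.sub h2).pow_const 2).div h3.aemeasurable)

lemma gagSq_eq_prod (N : ℕ) (s : ℝ) (hs : 0 < s) (u : EN N → ℝ)
    (hu : AEStronglyMeasurable u (volume : Measure (EN N))) :
    gagSq N s u = ∫⁻ z : EN N × EN N,
      ENNReal.ofReal ((u z.1 - u z.2) ^ 2 / ‖z.1 - z.2‖ ^ ((N : ℝ) + 2 * s))
      ∂((volume : Measure (EN N)).prod volume) :=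
  (lintegral_prod _ (gag_integrand_aemeas N s hs u hu)).symm

lemma gagSq_young (N : ℕ) (s : ℝ) (hs : 0 < s) (u v : EN N → ℝ)
    (hu : AEStronglyMeasurable u (volume : Measure (EN N)))
    (hv : AEStronglyMeasurable v (volume : Measure (EN N)))
    (η : ℝ) (hη : 0 < η) :
    gagSq N s v ≤ ENNReal.ofReal (1 + η) * gagSq N s u
      + ENNReal.ofReal (1 + 1/η) * gagSq N s (fun x => v x - u x) := by
  have hw : AEStronglyMeasurable (fun x => v x - u x) (volume : Measure (EN N)) := hv.sub hu
  have Hu := gag_integrand_aemeas N s hs u hu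
  have Hw := gag_integrand_aemeas N s hs _ hw
  rw [gagSq_eq_prod N s hs u hu, gagSq_eq_prod N s hs v hv, gagSq_eq_prod N s hs _ hw,
    ← lintegral_const_mul' _ _ ENNReal.ofReal_ne_top,
    ← lintegral_const_mul' _ _ ENNReal.ofReal_ne_top,
    ← lintegral_add_left' (Hu.const_mul _)]
  refine lintegral_mono fun z => ?_
  set d := ‖z.1 - z.2‖ ^ ((N : ℝ) + 2 * s) with hd
  have hd0 : 0 ≤ d := Real.rpow_nonneg (norm_nonneg _) _
  have hdi : 0 ≤ d⁻¹ := inv_nonneg.mpr hd0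
  have key : (v z.1 - v z.2) ^ 2 / d ≤
      (1 + η) * ((u z.1 - u z.2) ^ 2 / d)
        + (1 + 1/η) * (((v z.1 - u z.1) - (v z.2 - u z.2)) ^ 2 / d) := by
    have h := young_sq (u z.1 - u z.2) ((v z.1 - u z.1) - (v z.2 - u z.2)) η hη
    have hv' : v z.1 - v z.2 = (u z.1 - u z.2) + ((v z.1 - u z.1) - (v z.2 - u z.2)) := by ring
    rw [hv', div_eq_mul_inv, div_eq_mul_inv, div_eq_mul_inv]
    calc ((u z.1 - u z.2) + ((v z.1 - u z.1) - (v z.2 - u z.2))) ^ 2 * d⁻¹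
        ≤ ((1 + η) * (u z.1 - u z.2) ^ 2 + (1 + 1/η) * ((v z.1 - u z.1) - (v z.2 - u z.2)) ^ 2) * d⁻¹ :=
          mul_le_mul_of_nonneg_right h hdi
      _ = (1 + η) * ((u z.1 - u z.2) ^ 2 * d⁻¹)
            + (1 + 1/η) * (((v z.1 - u z.1) - (v z.2 - u z.2)) ^ 2 * d⁻¹) := by ring
  have hA : (0:ℝ) ≤ (u z.1 - u z.2) ^ 2 / d := div_nonneg (sq_nonneg _) hd0
  have hB : (0:ℝ) ≤ ((v z.1 - u z.1) - (v z.2 - u z.2)) ^ 2 / d := div_nonneg (sq_nonneg _) hd0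
  have hη1 : (0:ℝ) ≤ 1 + η := by linarith
  have hη2 : (0:ℝ) ≤ 1 + 1/η := by positivity
  calc ENNReal.ofReal ((v z.1 - v z.2) ^ 2 / d)
      ≤ ENNReal.ofReal ((1 + η) * ((u z.1 - u z.2) ^ 2 / d)
          + (1 + 1/η) * (((v z.1 - u z.1) - (v z.2 - u z.2)) ^ 2 / d)) :=
        ENNReal.ofReal_le_ofReal key
    _ = ENNReal.ofReal ((1 + η) * ((u z.1 - u z.2) ^ 2 / d))
          + ENNReal.ofReal ((1 + 1/η) * (((v z.1 - u z.1) - (v z.2 - u z.2)) ^ 2 / d)) :=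
        ENNReal.ofReal_add (mul_nonneg hη1 hA) (mul_nonneg hη2 hB)
    _ = ENNReal.ofReal (1 + η) * ENNReal.ofReal ((u z.1 - u z.2) ^ 2 / d)
          + ENNReal.ofReal (1 + 1/η) *
            ENNReal.ofReal (((v z.1 - u z.1) - (v z.2 - u z.2)) ^ 2 / d) := by
        rw [ENNReal.ofReal_mul hη1, ENNReal.ofReal_mul hη2]

lemma expsum_le_one {A B b c t0 t1 t : ℝ} (hA : 0 ≤ A) (hB : 0 ≤ B)
    (h0 : A * Real.exp (b * t0) + B * Real.exp (c * t0) = 1)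
    (h1 : A * Real.exp (b * t1) + B * Real.exp (c * t1) = 1)
    (ht0 : t0 ≤ t) (ht1 : t ≤ t1) :
    A * Real.exp (b * t) + B * Real.exp (c * t) ≤ 1 := by
  rcases eq_or_lt_of_le (ht0.trans ht1) with heq | hlt
  · have : t = t0 := le_antisymm (heq ▸ ht1) ht0
    rw [this]; exact h0.le
  · set μ := (t1 - t) / (t1 - t0) with hμ
    have hden : 0 < t1 - t0 := sub_pos.mpr hlt
    have hμ0 : 0 ≤ μ := div_nonneg (sub_nonneg.mpr ht1) hden.le
    have hμ1 : μ ≤ 1 := by rw [hμ, div_le_one hden]; linarith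
    have hmul : μ * (t1 - t0) = t1 - t := div_mul_cancel₀ _ hden.ne'
    have hrep : t = μ * t0 + (1 - μ) * t1 := by linear_combination hmul
    have conv : ∀ e : ℝ, Real.exp (e * t) ≤
        μ * Real.exp (e * t0) + (1 - μ) * Real.exp (e * t1) := by
      intro e
      have harg : e * t = μ * (e * t0) + (1 - μ) * (e * t1) := by rw [hrep]; ring
      have h2 : (0:ℝ) ≤ 1 - μ := by linarith
      have h3 : μ + (1 - μ) = 1 := by ring
      have := convexOn_exp.2 (Set.mem_univ (e * t0)) (Set.mem_univ (e * t1)) hμ0 h2 h3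
      simp only [smul_eq_mul] at this
      rw [harg]
      exact this
    have hb := conv b
    have hc := conv c
    nlinarith [mul_le_mul_of_nonneg_left hb hA, mul_le_mul_of_nonneg_left hc hB]


lemma lt_one_aux {x z : ℝ} (hx : 0 < x) (h : x ^ 2 / 2 < z * x ^ 2 / 2) : 1 < z := by
  by_contra hc
  push_neg at hc
  have h2 := mul_le_mul_of_nonneg_right hc (sq_nonneg x)
  rw [one_mul] at h2
  linarith

lemma nonneg_aux {x A B : ℝ} (hAB : A + B ≤ 1)
    (hkey : x ^ 2 / 2 - A * x ^ 2 / 2 - B * x ^ 2 / 2 < 0) : False := by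
  have h := mul_nonneg (by linarith : (0:ℝ) ≤ 1 - A - B) (sq_nonneg x)
  nlinarith [h]

set_option maxHeartbeats 1000000

/-- Lemma 3.2: if `u ∈ S(a₁)` and `J_{ε,T}(u) < 0` then `[u] < R₀`, and
`J_{ε,T} = J_ε` near `u` among functions with `‖v‖₂² ≤ a`. -/
theorem stmt17
    (N : ℕ) (s α q p a Cq Cp : ℝ)
    (hs0 : 0 < s) (hs1 : s < 1) (hN : 2 * s < (N : ℝ))
    (hα0 : 0 < α) (hαN : α < (N : ℝ))
    (hq1 : ((N : ℝ) + α) / N < q) (hq2 : q < ((N : ℝ) + 2 * s + α) / N)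
    (hp1 : ((N : ℝ) + 2 * s + α) / N < p) (hp2 : p ≤ ((N : ℝ) + α) / ((N : ℝ) - 2 * s))
    (ha : 0 < a) (hCq : 0 < Cq) (hCp : 0 < Cp)
    (hGNq : ∀ u, memH N s u → nlterm N α q u ≤
      Cq * gagNorm N s u ^ (2 * q * gam N s α q) *
        Real.sqrt (l2sq N u) ^ (2 * q * (1 - gam N s α q)))
    (hGNp : ∀ u, memH N s u → nlterm N α p u ≤
      Cp * gagNorm N s u ^ (2 * p * gam N s α p) *
        Real.sqrt (l2sq N u) ^ (2 * p * (1 - gam N s α p)))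
    (K E : ℝ)
    (hK : K = (p * gam N s α p - q * gam N s α q) / (1 - q * gam N s α q) *
      ((1 - q * gam N s α q) / (p * gam N s α p - 1)) ^
        ((p * gam N s α p - 1) / (p * gam N s α p - q * gam N s α q)) *
      (Cq / q) ^ ((p * gam N s α p - 1) / (p * gam N s α p - q * gam N s α q)) *
      (Cp / p) ^ ((1 - q * gam N s α q) / (p * gam N s α p - q * gam N s α q)))
    (hE : E = (q * (1 - gam N s α q) * (p * gam N s α p - 1) +
      p * (1 - gam N s α p) * (1 - q * gam N s α q)) / (p * gam N s α p - q * gam N s α q))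
    (h14 : K * a ^ E < 1)
    (w : ℝ → ℝ)
    (hw : ∀ r : ℝ, w r = 1 - Cq / q * a ^ (q * (1 - gam N s α q)) * r ^ (2 * q * gam N s α q - 2)
      - Cp / p * a ^ (p * (1 - gam N s α p)) * r ^ (2 * p * gam N s α p - 2))
    (R0 R1 : ℝ) (hR0 : 0 < R0) (hR01 : R0 < R1) (hwR0 : w R0 = 0) (hwR1 : w R1 = 0)
    (τ : ℝ → ℝ) (hτsm : ContDiff ℝ (⊤ : ℕ∞) τ) (hτanti : AntitoneOn τ (Ici 0))
    (hτ01 : ∀ r : ℝ, 0 ≤ r → τ r ∈ Icc (0 : ℝ) 1)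
    (hτone : ∀ r ∈ Icc (0 : ℝ) R0, τ r = 1) (hτzero : ∀ r : ℝ, R1 ≤ r → τ r = 0)
    (V : EN N → ℝ) (hVc : Continuous V) (hVbdd : BddAbove (Set.range V))
    (hVnn : ∀ x, 0 ≤ V x) (hV0 : V 0 = 0)
    (ε a1 : ℝ) (hε : 0 < ε) (ha1 : 0 < a1) (ha1a : a1 ≤ a)
    (u : EN N → ℝ) (hu : u ∈ msphere N s a1) (hJu : JTfun N s α q p V ε τ u < 0) :
    gagNorm N s u < R0 ∧
    ∃ δ : ℝ, 0 < δ ∧ ∀ v : EN N → ℝ, memH N s v →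
      Real.sqrt (hNormSq N s (fun x => v x - u x)) < δ → l2sq N v ≤ a →
      JTfun N s α q p V ε τ v = Jfun N s α q p V ε v := by

  -- ### basic numeric facts
  have hs2 : (0:ℝ) < 2 * s := by linarith
  have hN0 : (0:ℝ) < N := lt_trans hs2 hN
  have hNs : (0:ℝ) < (N:ℝ) - 2 * s := by linarith
  have hq1' : (N:ℝ) + α < N * q := by
    have h := (div_lt_iff₀ hN0).mp hq1; linarith [h]
  have hq2' : (N:ℝ) * q < N + 2 * s + α := by
    have h := (lt_div_iff₀ hN0).mp hq2; linarith [h]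
  have hp1' : (N:ℝ) + 2 * s + α < N * p := by
    have h := (div_lt_iff₀ hN0).mp hp1; linarith [h]
  have hp2' : p * ((N:ℝ) - 2 * s) ≤ (N:ℝ) + α := (le_div_iff₀ hNs).mp hp2
  have hq_gt1 : 1 < q := by
    have h : (1:ℝ) < ((N:ℝ) + α) / N := by rw [lt_div_iff₀ hN0]; linarith
    linarith
  have hp_gt1 : 1 < p := by
    have h : (1:ℝ) < ((N:ℝ) + 2 * s + α) / N := by rw [lt_div_iff₀ hN0]; linarith
    linarith
  have hq0 : (0:ℝ) < q := by linarith
  have hp0 : (0:ℝ) < p := by linarith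
  set gq := gam N s α q with hgqdef
  set gp := gam N s α p with hgpdef
  have hqgq : q * gq = ((N:ℝ) * q - N - α) / (2 * s) := by
    rw [hgqdef, gam]; field_simp
  have hpgp : p * gp = ((N:ℝ) * p - N - α) / (2 * s) := by
    rw [hgpdef, gam]; field_simp
  have hqgq_pos : 0 < q * gq := by
    rw [hqgq]; exact div_pos (by linarith) hs2
  have hqgq_lt1 : q * gq < 1 := by
    rw [hqgq, div_lt_one hs2]; linarith
  have hpgp_gt1 : 1 < p * gp := by
    rw [hpgp, lt_div_iff₀ hs2]; linarith
  have hgq_lt1 : gq < 1 := by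
    by_contra hc
    push_neg at hc
    have h := mul_le_mul_of_nonneg_left hc hq0.le
    rw [mul_one] at h
    linarith
  have hgp_le1 : gp ≤ 1 := by
    rw [hgpdef, gam, div_le_one (by positivity)]
    linarith [hp2']
  -- ### notation
  obtain ⟨humem, hua1⟩ := hu
  set r := gagNorm N s u with hrdef
  have hr0 : 0 ≤ r := Real.sqrt_nonneg _
  have hrsq : r ^ 2 = gagSqR N s u := by
    rw [hrdef, gagNorm]; exact Real.sq_sqrt ENNReal.toReal_nonneg
  have hVint : 0 ≤ ∫ x, V (ε • x) * (u x) ^ 2 :=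
    integral_nonneg fun x => mul_nonneg (hVnn _) (sq_nonneg _)
  have hQ0 : 0 ≤ nlterm N α q u := ENNReal.toReal_nonneg
  have hP0 : 0 ≤ nlterm N α p u := ENNReal.toReal_nonneg
  -- ### GN consequences with mass a
  have hsqrt_l2 : Real.sqrt (l2sq N u) ≤ Real.sqrt a := by
    rw [hua1]; exact Real.sqrt_le_sqrt ha1a
  have heq_exp : (0:ℝ) ≤ 2 * q * (1 - gq) :=
    mul_nonneg (by linarith) (by linarith)
  have hep_exp : (0:ℝ) ≤ 2 * p * (1 - gp) :=
    mul_nonneg (by linarith) (by linarith)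
  have hQa : Real.sqrt (l2sq N u) ^ (2 * q * (1 - gq)) ≤ a ^ (q * (1 - gq)) := by
    calc Real.sqrt (l2sq N u) ^ (2 * q * (1 - gq))
        ≤ Real.sqrt a ^ (2 * q * (1 - gq)) :=
          Real.rpow_le_rpow (Real.sqrt_nonneg _) hsqrt_l2 heq_exp
      _ = a ^ (q * (1 - gq)) := by
          rw [Real.sqrt_eq_rpow, ← Real.rpow_mul ha.le]
          congr 1; ring
  have hPa : Real.sqrt (l2sq N u) ^ (2 * p * (1 - gp)) ≤ a ^ (p * (1 - gp)) := by
    calc Real.sqrt (l2sq N u) ^ (2 * p * (1 - gp))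
        ≤ Real.sqrt a ^ (2 * p * (1 - gp)) :=
          Real.rpow_le_rpow (Real.sqrt_nonneg _) hsqrt_l2 hep_exp
      _ = a ^ (p * (1 - gp)) := by
          rw [Real.sqrt_eq_rpow, ← Real.rpow_mul ha.le]
          congr 1; ring
  have hQle : nlterm N α q u ≤ Cq * a ^ (q * (1 - gq)) * r ^ (2 * q * gq) := by
    have h := hGNq u humem
    rw [← hrdef] at h
    calc nlterm N α q u
        ≤ Cq * r ^ (2 * q * gq) * Real.sqrt (l2sq N u) ^ (2 * q * (1 - gq)) := h
      _ ≤ Cq * r ^ (2 * q * gq) * a ^ (q * (1 - gq)) :=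
          mul_le_mul_of_nonneg_left hQa (mul_nonneg hCq.le (Real.rpow_nonneg hr0 _))
      _ = Cq * a ^ (q * (1 - gq)) * r ^ (2 * q * gq) := by ring
  have hPle : nlterm N α p u ≤ Cp * a ^ (p * (1 - gp)) * r ^ (2 * p * gp) := by
    have h := hGNp u humem
    rw [← hrdef] at h
    calc nlterm N α p u
        ≤ Cp * r ^ (2 * p * gp) * Real.sqrt (l2sq N u) ^ (2 * p * (1 - gp)) := h
      _ ≤ Cp * r ^ (2 * p * gp) * a ^ (p * (1 - gp)) :=
          mul_le_mul_of_nonneg_left hPa (mul_nonneg hCp.le (Real.rpow_nonneg hr0 _))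
      _ = Cp * a ^ (p * (1 - gp)) * r ^ (2 * p * gp) := by ring
  set Aq := Cq / q * a ^ (q * (1 - gq)) with hAqdef
  set Ap := Cp / p * a ^ (p * (1 - gp)) with hApdef
  have hAq0 : 0 < Aq := mul_pos (div_pos hCq hq0) (Real.rpow_pos_of_pos ha _)
  have hAp0 : 0 < Ap := mul_pos (div_pos hCp hp0) (Real.rpow_pos_of_pos ha _)
  have hwR0' := hwR0
  rw [hw R0] at hwR0'
  have hwR1' := hwR1
  rw [hw R1] at hwR1'
  -- ### Part 1 : r < R0
  have hpart1 : r < R0 := by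
    by_contra hge
    push_neg at hge
    have hrpos : 0 < r := lt_of_lt_of_le hR0 hge
    unfold JTfun at hJu
    rw [← hrdef, ← hrsq] at hJu
    have h2q : (0:ℝ) < 2 * q := by linarith
    have h2p : (0:ℝ) < 2 * p := by linarith
    have hsplitq : r ^ (2 * q * gq) = r ^ (2 * q * gq - 2) * r ^ 2 := by
      have h := Real.rpow_add hrpos (2 * q * gq - 2) 2
      rw [Real.rpow_two, show (2 * q * gq - 2) + 2 = 2 * q * gq by ring] at h
      exact h
    have hQd : nlterm N α q u / (2 * q) ≤ Aq * r ^ (2 * q * gq - 2) * r ^ 2 / 2 := by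
      have h0 : nlterm N α q u / (2 * q)
          ≤ Cq * a ^ (q * (1 - gq)) * r ^ (2 * q * gq) / (2 * q) :=
        (div_le_div_iff_of_pos_right h2q).mpr hQle
      have heq2 : Cq * a ^ (q * (1 - gq)) * r ^ (2 * q * gq) / (2 * q)
          = Aq * r ^ (2 * q * gq - 2) * r ^ 2 / 2 := by
        rw [hAqdef, hsplitq]; field_simp
      linarith
    rcases le_or_gt R1 r with hc1 | hc2
    · -- case r ≥ R1 : truncation kills the p-term
      rw [hτzero r hc1, zero_mul, zero_div] at hJu
      have h1 : r ^ 2 / 2 < nlterm N α q u / (2 * q) := by linarith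
      have hZ : 1 < Aq * r ^ (2 * q * gq - 2) :=
        lt_one_aux hrpos (lt_of_lt_of_le h1 hQd)
      have hApR0 : 0 < Ap * R0 ^ (2 * p * gp - 2) :=
        mul_pos hAp0 (Real.rpow_pos_of_pos hR0 _)
      have hmono : r ^ (2 * q * gq - 2) ≤ R0 ^ (2 * q * gq - 2) :=
        Real.rpow_le_rpow_of_nonpos hR0 hge (by linarith)
      have : Aq * r ^ (2 * q * gq - 2) ≤ Aq * R0 ^ (2 * q * gq - 2) :=
        mul_le_mul_of_nonneg_left hmono hAq0.le
      linarith
    · -- case R0 ≤ r < R1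
      have hτr := hτ01 r hr0
      have hsplitp : r ^ (2 * p * gp) = r ^ (2 * p * gp - 2) * r ^ 2 := by
        have h := Real.rpow_add hrpos (2 * p * gp - 2) 2
        rw [Real.rpow_two, show (2 * p * gp - 2) + 2 = 2 * p * gp by ring] at h
        exact h
      have hPd : τ r * nlterm N α p u / (2 * p) ≤ Ap * r ^ (2 * p * gp - 2) * r ^ 2 / 2 := by
        have hstep1 : τ r * nlterm N α p u ≤ nlterm N α p u :=
          mul_le_of_le_one_left hP0 hτr.2
        have h0 : τ r * nlterm N α p u / (2 * p)
            ≤ Cp * a ^ (p * (1 - gp)) * r ^ (2 * p * gp) / (2 * p) :=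
          (div_le_div_iff_of_pos_right h2p).mpr (le_trans hstep1 hPle)
        have heq2 : Cp * a ^ (p * (1 - gp)) * r ^ (2 * p * gp) / (2 * p)
            = Ap * r ^ (2 * p * gp - 2) * r ^ 2 / 2 := by
          rw [hApdef, hsplitp]; field_simp
        linarith
      have hkey : r ^ 2 / 2 - Aq * r ^ (2 * q * gq - 2) * r ^ 2 / 2
          - Ap * r ^ (2 * p * gp - 2) * r ^ 2 / 2 < 0 := by linarith
      -- w(r) ≥ 0 on [R0, R1] by convexity of exponential sums
      have e0q : Real.exp ((2 * q * gq - 2) * Real.log R0) = R0 ^ (2 * q * gq - 2) := by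
        rw [Real.rpow_def_of_pos hR0, mul_comm]
      have e0p : Real.exp ((2 * p * gp - 2) * Real.log R0) = R0 ^ (2 * p * gp - 2) := by
        rw [Real.rpow_def_of_pos hR0, mul_comm]
      have e1q : Real.exp ((2 * q * gq - 2) * Real.log R1) = R1 ^ (2 * q * gq - 2) := by
        rw [Real.rpow_def_of_pos (hR0.trans hR01), mul_comm]
      have e1p : Real.exp ((2 * p * gp - 2) * Real.log R1) = R1 ^ (2 * p * gp - 2) := by
        rw [Real.rpow_def_of_pos (hR0.trans hR01), mul_comm]
      have erq : Real.exp ((2 * q * gq - 2) * Real.log r) = r ^ (2 * q * gq - 2) := by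
        rw [Real.rpow_def_of_pos hrpos, mul_comm]
      have erp : Real.exp ((2 * p * gp - 2) * Real.log r) = r ^ (2 * p * gp - 2) := by
        rw [Real.rpow_def_of_pos hrpos, mul_comm]
      have hconv : Aq * Real.exp ((2 * q * gq - 2) * Real.log r)
          + Ap * Real.exp ((2 * p * gp - 2) * Real.log r) ≤ 1 := by
        apply expsum_le_one hAq0.le hAp0.le ?_ ?_
          (Real.log_le_log hR0 hge) (Real.log_le_log hrpos hc2.le)
        · rw [e0q, e0p]; linarith
        · rw [e1q, e1p]; linarith
      rw [erq, erp] at hconv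
      exact nonneg_aux hconv hkey
  refine ⟨hpart1, ?_⟩
  -- ### Part 2 : locally JT = J
  have hr2lt : r ^ 2 < R0 ^ 2 := by
    have := pow_lt_pow_left₀ hpart1 hr0 two_ne_zero
    linarith [this]
  set η := (R0 ^ 2 - r ^ 2) / (2 * (r ^ 2 + 1)) with hηdef
  have hη : 0 < η := div_pos (by linarith) (by positivity)
  have h1η : (1 + η) * r ^ 2 < R0 ^ 2 := by
    have h2 : η * (r ^ 2 + 1) = (R0 ^ 2 - r ^ 2) / 2 := by
      rw [hηdef]; field_simp
    linarith [h2, hr2lt, hη.le, sq_nonneg r]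
  have hηinv : (0:ℝ) < 1 + 1 / η := by positivity
  set D := (R0 ^ 2 - (1 + η) * r ^ 2) / (1 + 1 / η) with hDdef
  have hD : 0 < D := div_pos (by linarith) hηinv
  refine ⟨Real.sqrt (D / 2), Real.sqrt_pos.mpr (by linarith), ?_⟩
  intro v hmv hdist hl2
  have hwm : AEStronglyMeasurable (fun x => v x - u x) (volume : Measure (EN N)) :=
    hmv.1.1.sub humem.1.1
  -- finiteness of the Gagliardo energy of the difference
  have hneg : gagSq N s (fun x => (v x - u x) - v x) = gagSq N s u := by
    unfold gagSq
    refine lintegral_congr fun x => lintegral_congr fun y => ?_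
    congr 1
    ring
  have hfin_vu : gagSq N s (fun x => v x - u x) < ⊤ := by
    have hy := gagSq_young N s hs0 v (fun x => v x - u x) hmv.1.1 hwm 1 one_pos
    rw [hneg] at hy
    exact lt_of_le_of_lt hy (ENNReal.add_lt_top.mpr
      ⟨ENNReal.mul_lt_top ENNReal.ofReal_lt_top hmv.2,
        ENNReal.mul_lt_top ENNReal.ofReal_lt_top humem.2⟩)
  -- bound on the difference seminorm
  have hl2w : 0 ≤ l2sq N (fun x => v x - u x) := integral_nonneg fun x => sq_nonneg _
  have hhn : hNormSq N s (fun x => v x - u x) < D / 2 := by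
    have h := (Real.sqrt_lt' (Real.sqrt_pos.mpr (by linarith : (0:ℝ) < D / 2))).mp hdist
    rwa [Real.sq_sqrt (by linarith : (0:ℝ) ≤ D / 2)] at h
  have hgw : gagSqR N s (fun x => v x - u x) < D / 2 := by
    unfold hNormSq at hhn
    linarith
  -- Young inequality for the seminorms
  have hy := gagSq_young N s hs0 u v humem.1.1 hmv.1.1 η hη
  have hfu : ENNReal.ofReal (1 + η) * gagSq N s u ≠ ⊤ :=
    (ENNReal.mul_lt_top ENNReal.ofReal_lt_top humem.2).ne
  have hfw : ENNReal.ofReal (1 + 1 / η) * gagSq N s (fun x => v x - u x) ≠ ⊤ :=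
    (ENNReal.mul_lt_top ENNReal.ofReal_lt_top hfin_vu).ne
  have hyR : gagSqR N s v ≤ (1 + η) * gagSqR N s u
      + (1 + 1 / η) * gagSqR N s (fun x => v x - u x) := by
    have h := ENNReal.toReal_mono (ENNReal.add_ne_top.mpr ⟨hfu, hfw⟩) hy
    rw [ENNReal.toReal_add hfu hfw, ENNReal.toReal_mul, ENNReal.toReal_mul,
      ENNReal.toReal_ofReal (by linarith), ENNReal.toReal_ofReal (by positivity)] at h
    exact h
  have hgag_v : gagSqR N s v < R0 ^ 2 := by
    have h2 : (1 + 1 / η) * D = R0 ^ 2 - (1 + η) * r ^ 2 := by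
      rw [hDdef]
      field_simp
    have h3 : (1 + 1 / η) * gagSqR N s (fun x => v x - u x) < (1 + 1 / η) * (D / 2) :=
      (mul_lt_mul_iff_right₀ hηinv).mpr hgw
    have h4 : (1 + 1 / η) * (D / 2) = ((1 + 1 / η) * D) / 2 := by ring
    have hu2 : gagSqR N s u = r ^ 2 := hrsq.symm
    rw [hu2] at hyR
    rw [h4, h2] at h3
    linarith
  have hgnv : gagNorm N s v < R0 := by
    rw [gagNorm]
    exact (Real.sqrt_lt' hR0).mpr hgag_v
  have hτv : τ (gagNorm N s v) = 1 := hτone _ ⟨Real.sqrt_nonneg _, hgnv.le⟩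
  unfold JTfun Jfun
  rw [hτv, one_mul]
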